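/- The bilinear form 𝔄 is symmetric (𝔄(τ, σ) = 𝔄(σ, τ) for all σ, τ ∈ P) if m ≡ 0 or 1 (mod 4), and antisymmetric (𝔄(τ, σ) = −𝔄(σ, τ) for all σ, τ ∈ P) if m ≡ 2 or 3 (mod 4). -/

import Mathlib

noncomputable section

/-- The spinor space `P`: complex functions on subsets of `Fin m`
(the fermionic Fock model of the exterior algebra of `ℂ^m`). -/
abbrev SpinorSpace (m : ℕ) := Finset (Fin m) → ℂ

/-- The creation operator `c_j`. -/
def creation {m : ℕ} (j : Fin m) (f : SpinorSpace m) : SpinorSpace m := fun S =>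
  if j ∈ S then (-1 : ℂ) ^ (S.filter fun i => i < j).card * f (S.erase j) else 0

/-- The annihilation operator `a_j`. -/
def annihilation {m : ℕ} (j : Fin m) (f : SpinorSpace m) : SpinorSpace m := fun S =>
  if j ∈ S then 0 else (-1 : ℂ) ^ (S.filter fun i => i < j).card * f (insert j S)

/-- The gamma operators `Γ_I`, `I = 1, …, 2m`, here indexed by `Fin (2 * m)` (0-based):
`Γ_j = c_j + a_j` and `Γ_{m+j} = i (c_j − a_j)` for `j = 1, …, m`. -/
def gammaOp {m : ℕ} (I : Fin (2 * m)) (f : SpinorSpace m) : SpinorSpace m :=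
  if h : (I : ℕ) < m then
    creation ⟨(I : ℕ), h⟩ f + annihilation ⟨(I : ℕ), h⟩ f
  else
    Complex.I • (creation ⟨(I : ℕ) - m, by have := I.isLt; omega⟩ f
      - annihilation ⟨(I : ℕ) - m, by have := I.isLt; omega⟩ f)

/-- The Hermitian inner product `⟨f, g⟩ = Σ_S conj (f S) * g S` on the spinor space. -/
def herm {m : ℕ} (f g : SpinorSpace m) : ℂ :=
  ∑ S : Finset (Fin m), (starRingEnd ℂ) (f S) * g S

/-- The composition `Γ_{I₁} ∘ Γ_{I₂} ∘ ⋯ ∘ Γ_{I_k}` corresponding to a list of indices. -/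
def gammaProd {m : ℕ} (l : List (Fin (2 * m))) : SpinorSpace m → SpinorSpace m :=
  l.foldr (fun I F => gammaOp I ∘ F) id

/-- The conjugation operator `κ`. -/
def conjOp {m : ℕ} (f : SpinorSpace m) : SpinorSpace m := fun S => (starRingEnd ℂ) (f S)

/-- The conjugate-linear operator `A = Γ_1 ∘ Γ_2 ∘ ⋯ ∘ Γ_m ∘ κ`. -/
def opA (m : ℕ) : SpinorSpace m → SpinorSpace m :=
  gammaProd (List.ofFn fun j : Fin m =>
    (⟨(j : ℕ), by have := j.isLt; omega⟩ : Fin (2 * m))) ∘ conjOp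

/-- The conjugate-linear operator `B = Γ_{m+1} ∘ Γ_{m+2} ∘ ⋯ ∘ Γ_{2m} ∘ κ`. -/
def opB (m : ℕ) : SpinorSpace m → SpinorSpace m :=
  gammaProd (List.ofFn fun j : Fin m =>
    (⟨m + (j : ℕ), by have := j.isLt; omega⟩ : Fin (2 * m))) ∘ conjOp

/-- The bilinear form `𝔄(σ, τ) = ⟨A σ, τ⟩`. -/
def formA {m : ℕ} (σ τ : SpinorSpace m) : ℂ := herm (opA m σ) τ

/-- The bilinear form `𝔅(σ, τ) = ⟨B σ, τ⟩`. -/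
def formB {m : ℕ} (σ τ : SpinorSpace m) : ℂ := herm (opB m σ) τ

/-! On the indices `j < m`, `Γ_j = c_j + a_j` acts on a basis vector by toggling `j`, with the sign
`(-1) ^ #{i ∈ S | i < j}`. Running through `j = 0, …, m - 1` toggles every index, so
`A σ T = ± conj (σ Tᶜ)`. Started from `T` and from `Tᶜ`, the intermediate sets stay complementary,
so the two sign exponents at step `j` add up to `j`, and the total exponents at `T` and `Tᶜ` add up
to `m (m - 1) / 2`. Substituting `T ↦ Tᶜ` in the sum defining `𝔄` gives
`𝔄(τ, σ) = (-1) ^ (m (m - 1) / 2) 𝔄(σ, τ)`, and `m (m - 1) / 2` is even iff `m ≡ 0, 1 (mod 4)`. -/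

open Finset

section Gamma

variable {m : ℕ}

def toggle (j : Fin m) (S : Finset (Fin m)) : Finset (Fin m) :=
  if j ∈ S then S.erase j else insert j S

lemma toggle_eq_symmDiff (j : Fin m) (S : Finset (Fin m)) : toggle j S = symmDiff S {j} := by
  ext i
  by_cases hjS : j ∈ S <;> by_cases hij : i = j <;> simp [toggle, hjS, hij, mem_symmDiff]

lemma toggle_compl (j : Fin m) (S : Finset (Fin m)) : toggle j Sᶜ = (toggle j S)ᶜ := by
  ext i
  by_cases hjS : j ∈ S <;> by_cases hij : i = j <;> simp [toggle, hjS, hij]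

lemma foldl_toggle_of_nodup {l : List (Fin m)} (hl : l.Nodup) (S : Finset (Fin m)) :
    l.foldl (fun S j => toggle j S) S = symmDiff S l.toFinset := by
  induction l generalizing S with
  | nil => exact (symmDiff_bot S).symm
  | cons j l ih =>
    obtain ⟨hj, hl⟩ := List.nodup_cons.mp hl
    have hdisj : Disjoint {j} l.toFinset := disjoint_singleton_left.mpr (by simpa using hj)
    rw [List.foldl_cons, ih hl, toggle_eq_symmDiff, symmDiff_assoc, List.toFinset_cons,
      insert_eq, hdisj.symmDiff_eq_sup, sup_eq_union]

lemma card_filter_lt_add_card_filter_compl_lt (j : Fin m) (S : Finset (Fin m)) :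
    #{i ∈ S | i < j} + #{i ∈ Sᶜ | i < j} = j := by
  rw [← card_union_of_disjoint (disjoint_filter_filter disjoint_compl_right), ← filter_union,
    union_compl, filter_gt_eq_Iio, Fin.card_Iio]

def gammaSign : List (Fin m) → Finset (Fin m) → ℕ
  | [], _ => 0
  | j :: l, S => #{i ∈ S | i < j} + gammaSign l (toggle j S)

lemma gammaSign_add_gammaSign_compl (l : List (Fin m)) (S : Finset (Fin m)) :
    gammaSign l S + gammaSign l Sᶜ = (l.map Fin.val).sum := by
  induction l generalizing S with
  | nil => rfl
  | cons j l ih =>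
    have hj := card_filter_lt_add_card_filter_compl_lt j S
    have hl := ih (toggle j S)
    simp only [gammaSign, List.map_cons, List.sum_cons, toggle_compl]
    omega

lemma gammaOp_castLE_apply (j : Fin m) (f : SpinorSpace m) (S : Finset (Fin m)) :
    gammaOp (Fin.castLE (by omega) j : Fin (2 * m)) f S =
      (-1) ^ #{i ∈ S | i < j} * f (toggle j S) := by
  simp only [gammaOp, Fin.val_castLE, j.isLt, ↓reduceDIte]
  by_cases hjS : j ∈ S <;> simp [creation, annihilation, toggle, hjS]

lemma gammaProd_map_castLE_apply (l : List (Fin m)) (f : SpinorSpace m) (S : Finset (Fin m)) :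
    gammaProd (l.map (Fin.castLE (by omega) : Fin m → Fin (2 * m))) f S =
      (-1) ^ gammaSign l S * f (l.foldl (fun S j => toggle j S) S) := by
  induction l generalizing S with
  | nil => simp [gammaProd, gammaSign]
  | cons j l ih =>
    change gammaOp _ (gammaProd _ f) S = _
    rw [gammaOp_castLE_apply, ih, gammaSign, pow_add, mul_assoc, List.foldl_cons]

lemma opA_apply (σ : SpinorSpace m) (T : Finset (Fin m)) :
    opA m σ T = (-1) ^ gammaSign (List.finRange m) T * starRingEnd ℂ (σ Tᶜ) := by
  have hA : opA m σ =
      gammaProd ((List.finRange m).map (Fin.castLE (by omega))) (conjOp σ) := by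
    rw [opA, List.ofFn_eq_map]; rfl
  rw [hA, gammaProd_map_castLE_apply, foldl_toggle_of_nodup (List.nodup_finRange m),
    List.toFinset_finRange, ← top_eq_univ, symmDiff_top]
  rfl

lemma formA_eq_sum (σ τ : SpinorSpace m) :
    formA σ τ = ∑ T, (-1) ^ gammaSign (List.finRange m) T * σ Tᶜ * τ T := by
  rw [formA, herm]
  refine sum_congr rfl fun T _ => ?_
  rw [opA_apply, map_mul, map_pow, map_neg, map_one, Complex.conj_conj]

lemma formA_swap (σ τ : SpinorSpace m) :
    formA τ σ = (-1) ^ (∑ i ∈ range m, i) * formA σ τ := by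
  rw [formA_eq_sum, formA_eq_sum, mul_sum,
    ← Equiv.sum_comp (compl_involutive.toPerm _)]
  refine sum_congr rfl fun T _ => ?_
  have hT := gammaSign_add_gammaSign_compl (List.finRange m) T
  rw [← List.ofFn_eq_map, List.sum_ofFn, Fin.sum_univ_eq_sum_range (fun i => i)] at hT
  change (-1) ^ gammaSign _ Tᶜ * τ Tᶜᶜ * σ Tᶜ = _
  have hsq : ((-1 : ℂ) ^ gammaSign (List.finRange m) T) ^ 2 = 1 := by
    rw [← pow_mul', (even_two_mul _).neg_one_pow]
  rw [compl_compl, ← hT, pow_add]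
  linear_combination (-(-1) ^ gammaSign (List.finRange m) Tᶜ * σ Tᶜ * τ T) * hsq

end Gamma

theorem even_sum_range_id_iff (m : ℕ) :
    Even (∑ i ∈ range m, i) ↔ m % 4 = 0 ∨ m % 4 = 1 := by
  induction m using Nat.strong_induction_on with
  | _ m ih =>
    match m with
    | 0 | 1 | 2 | 3 => decide
    | m + 4 =>
      have hstep : ∑ i ∈ range (m + 4), i = ∑ i ∈ range m, i + 2 * (2 * m + 3) := by
        simp only [sum_range_succ]; ring
      rw [hstep, Nat.even_add, iff_true_intro (even_two_mul _), iff_true, ih m (by omega)]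
      omega

theorem formA_symm_or_antisymm (m : ℕ) :
    (m % 4 = 0 ∨ m % 4 = 1 → ∀ σ τ : SpinorSpace m, formA τ σ = formA σ τ) ∧
    (m % 4 = 2 ∨ m % 4 = 3 → ∀ σ τ : SpinorSpace m, formA τ σ = -formA σ τ) := by
  refine ⟨fun h σ τ => ?_, fun h σ τ => ?_⟩
  · rw [formA_swap, ((even_sum_range_id_iff m).mpr h).neg_one_pow, one_mul]
  · have hodd : Odd (∑ i ∈ range m, i) := by
      rw [← Nat.not_even_iff_odd, even_sum_range_id_iff]
      omega
    rw [formA_swap, hodd.neg_one_pow, neg_one_mul]
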